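/- arXiv:2508.08023 — 6 statements merged into one kernel-verified Lean document; each statement's English description precedes it below -/
import Mathlib

section
/- For each node x_i, the sum of the multinode Shepard basis functions over the index set J_i = {j : x_i ∈ t_j} equals 1 at x_i: ∑_{j ∈ J_i} B_{μ,j}(x_i) = 1 (in the sense of the continuous extension). -/
theorem multinode_shepard_sum_at_node
    {s n m : ℕ}
    (X : Fin n → EuclideanSpace ℝ (Fin s)) (hX : Function.Injective X)
    (τ : ℕ) (t : Fin m → Finset (Fin n)) (ht : ∀ j, (t j).card = τ)
    (hcov : ∀ i, ∃ j, i ∈ t j)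
    (μ : ℝ) (hμ : 0 < μ)
    (W : Fin m → EuclideanSpace ℝ (Fin s) → ℝ)
    (hW : ∀ j x, W j x = ∏ q ∈ (t j)ᶜ, ‖x - X q‖ ^ μ)
    (B : Fin m → EuclideanSpace ℝ (Fin s) → ℝ)
    (hB : ∀ j x, B j x = W j x / ∑ k, W k x)
    (i : Fin n) :
    ∑ j ∈ Finset.univ.filter (fun j => i ∈ t j), B j (X i) = 1 := by
  have hzero : ∀ j, i ∉ t j → W j (X i) = 0 := by
    intro j hj
    rw [hW]
    apply Finset.prod_eq_zero (Finset.mem_compl.mpr hj)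
    rw [sub_self, norm_zero, Real.zero_rpow hμ.ne']
  have hpos : ∀ j, i ∈ t j → 0 < W j (X i) := by
    intro j hj
    rw [hW]
    apply Finset.prod_pos
    intro q hq
    apply Real.rpow_pos_of_pos
    rw [norm_pos_iff, sub_ne_zero]
    intro h
    exact (Finset.mem_compl.mp hq) (hX h ▸ hj)
  have hS : 0 < ∑ k, W k (X i) := by
    obtain ⟨j, hj⟩ := hcov i
    apply Finset.sum_pos' (fun k _ => ?_) ⟨j, Finset.mem_univ j, hpos j hj⟩
    by_cases hk : i ∈ t k
    · exact (hpos k hk).le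
    · exact (hzero k hk).ge
  have key : ∑ j ∈ Finset.univ.filter (fun j => i ∈ t j), W j (X i)
      = ∑ k, W k (X i) := by
    apply Finset.sum_filter_of_ne
    intro j _ hj
    by_contra hmem
    exact hj (hzero j hmem)
  simp only [hB]
  rw [← Finset.sum_div, key, div_self hS.ne']
end

section
/- If μ > 1, then every multinode Shepard basis function B_{μ,j} is differentiable at each node x_i with x_i ∉ t_j, and its gradient there is zero: ∇B_{μ,j}(x_i) = 0. -/
open Filter Topology

lemma msgv_hasFDerivAt_norm_rpow {s : ℕ} (x₀ : EuclideanSpace ℝ (Fin s)) {μ : ℝ}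
    (hμ : 1 < μ) :
    HasFDerivAt (fun x : EuclideanSpace ℝ (Fin s) => ‖x - x₀‖ ^ μ)
      (0 : EuclideanSpace ℝ (Fin s) →L[ℝ] ℝ) x₀ := by
  have hμ0 : μ ≠ 0 := by linarith
  rw [hasFDerivAt_iff_isLittleO_nhds_zero]
  simp only [add_sub_cancel_left, sub_self, norm_zero, Real.zero_rpow hμ0,
    ContinuousLinearMap.zero_apply, sub_zero]
  rw [Asymptotics.isLittleO_iff]
  intro c hc
  have hcont : ContinuousAt (fun t : ℝ => t ^ (μ - 1)) 0 :=
    Real.continuousAt_rpow_const 0 (μ - 1) (Or.inr (by linarith))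
  have htend : Filter.Tendsto (fun h : EuclideanSpace ℝ (Fin s) => ‖h‖ ^ (μ - 1))
      (𝓝 0) (𝓝 0) := by
    have hn : Filter.Tendsto (fun h : EuclideanSpace ℝ (Fin s) => ‖h‖) (𝓝 0) (𝓝 0) := by
      simpa using continuous_norm.tendsto (0 : EuclideanSpace ℝ (Fin s))
    have := hcont.tendsto.comp hn
    simpa [Function.comp_def, Real.zero_rpow (by linarith : μ - 1 ≠ 0)] using this
  filter_upwards [htend.eventually_lt_const hc] with h hx
  rcases eq_or_ne h 0 with rfl | hne
  · simp [Real.zero_rpow hμ0]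
  · have hpos : 0 < ‖h‖ := norm_pos_iff.mpr hne
    have h1 : ‖h‖ ^ μ = ‖h‖ ^ (μ - 1) * ‖h‖ := by
      rw [← Real.rpow_add_one hpos.ne' (μ - 1)]
      congr 1
      ring
    rw [Real.norm_of_nonneg (Real.rpow_nonneg (norm_nonneg _) _), h1]
    exact mul_le_mul_of_nonneg_right hx.le (norm_nonneg _)

theorem multinode_shepard_gradient_vanishes
    {s n m : ℕ}
    (X : Fin n → EuclideanSpace ℝ (Fin s)) (hX : Function.Injective X)
    (τ : ℕ) (t : Fin m → Finset (Fin n)) (ht : ∀ j, (t j).card = τ)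
    (hcov : ∀ i, ∃ j, i ∈ t j)
    (μ : ℝ) (hμ : 1 < μ)
    (W : Fin m → EuclideanSpace ℝ (Fin s) → ℝ)
    (hW : ∀ j x, W j x = ∏ q ∈ (t j)ᶜ, ‖x - X q‖ ^ μ)
    (B : Fin m → EuclideanSpace ℝ (Fin s) → ℝ)
    (hB : ∀ j x, B j x = W j x / ∑ k, W k x)
    (j : Fin m) (i : Fin n) (hij : i ∉ t j) :
    DifferentiableAt ℝ (B j) (X i) ∧ fderiv ℝ (B j) (X i) = 0 := by
  classical
  set x₀ := X i with hx₀
  have hμ0 : μ ≠ 0 := by linarith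
  have hfac : ∀ q : Fin n, q ≠ i →
      DifferentiableAt ℝ (fun x : EuclideanSpace ℝ (Fin s) => ‖x - X q‖ ^ μ) x₀ := by
    intro q hq
    have hne : x₀ - X q ≠ 0 := by
      rw [sub_ne_zero]
      exact fun h => hq (hX h.symm)
    have h1 : DifferentiableAt ℝ (fun x : EuclideanSpace ℝ (Fin s) => ‖x - X q‖) x₀ :=
      (differentiableAt_id.sub_const (X q)).norm ℝ hne
    exact h1.rpow_const (Or.inl (norm_ne_zero_iff.mpr hne))
  have hprodd : ∀ u : Finset (Fin n), (∀ q ∈ u, q ≠ i) →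
      DifferentiableAt ℝ (fun x : EuclideanSpace ℝ (Fin s) => ∏ q ∈ u, ‖x - X q‖ ^ μ) x₀ := by
    intro u hu
    have h := HasFDerivAt.finset_prod (u := u)
      (g := fun q (x : EuclideanSpace ℝ (Fin s)) => ‖x - X q‖ ^ μ)
      (g' := fun q => fderiv ℝ (fun x : EuclideanSpace ℝ (Fin s) => ‖x - X q‖ ^ μ) x₀)
      (x := x₀)
      (fun q hq => (hfac q (hu q hq)).hasFDerivAt)
    exact h.differentiableAt
  have hWdiff : ∀ k, DifferentiableAt ℝ (W k) x₀ := by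
    intro k
    have hWk : W k = fun x => ∏ q ∈ (t k)ᶜ, ‖x - X q‖ ^ μ := funext (hW k)
    rw [hWk]
    by_cases hik : i ∈ t k
    · exact hprodd _ (fun q hq h => (Finset.mem_compl.mp hq) (h ▸ hik))
    · have hi : i ∈ (t k)ᶜ := Finset.mem_compl.mpr hik
      have hsplit : (fun x : EuclideanSpace ℝ (Fin s) => ∏ q ∈ (t k)ᶜ, ‖x - X q‖ ^ μ)
          = fun x => (‖x - X i‖ ^ μ) * ∏ q ∈ (t k)ᶜ.erase i, ‖x - X q‖ ^ μ := by
        funext x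
        exact (Finset.mul_prod_erase _ _ hi).symm
      rw [hsplit]
      exact (msgv_hasFDerivAt_norm_rpow x₀ hμ).differentiableAt.mul
        (hprodd _ (fun q hq => Finset.ne_of_mem_erase hq))
  have hWj0 : W j x₀ = 0 := by
    rw [hW j x₀]
    apply Finset.prod_eq_zero (Finset.mem_compl.mpr hij)
    simp [hx₀, Real.zero_rpow hμ0]
  have hWjderiv : HasFDerivAt (W j) (0 : EuclideanSpace ℝ (Fin s) →L[ℝ] ℝ) x₀ := by
    have hi : i ∈ (t j)ᶜ := Finset.mem_compl.mpr hij
    have hsplit : W j = fun x => (‖x - X i‖ ^ μ) * ∏ q ∈ (t j)ᶜ.erase i, ‖x - X q‖ ^ μ := by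
      funext x
      rw [hW j x]
      exact (Finset.mul_prod_erase _ _ hi).symm
    have hrest : DifferentiableAt ℝ
        (fun x : EuclideanSpace ℝ (Fin s) => ∏ q ∈ (t j)ᶜ.erase i, ‖x - X q‖ ^ μ) x₀ :=
      hprodd _ (fun q hq => Finset.ne_of_mem_erase hq)
    have h := (msgv_hasFDerivAt_norm_rpow x₀ hμ).mul hrest.hasFDerivAt
    rw [hsplit]
    refine h.congr_fderiv ?_
    simp [Real.zero_rpow hμ0]
  have hSdiff : DifferentiableAt ℝ (fun x => ∑ k, W k x) x₀ :=
    DifferentiableAt.fun_sum (fun k _ => hWdiff k)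
  have hWnonneg : ∀ k, 0 ≤ W k x₀ := by
    intro k
    rw [hW k x₀]
    exact Finset.prod_nonneg fun q _ => Real.rpow_nonneg (norm_nonneg _) _
  have hSpos : (0 : ℝ) < ∑ k, W k x₀ := by
    obtain ⟨k, hk⟩ := hcov i
    apply Finset.sum_pos' (fun k _ => hWnonneg k) ⟨k, Finset.mem_univ k, ?_⟩
    rw [hW k x₀]
    apply Finset.prod_pos
    intro q hq
    have hq' : q ≠ i := fun h => (Finset.mem_compl.mp hq) (h ▸ hk)
    have : x₀ - X q ≠ 0 := by
      rw [sub_ne_zero]; exact fun h => hq' (hX h.symm)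
    exact Real.rpow_pos_of_pos (norm_pos_iff.mpr this) _
  have hSne : (∑ k, W k x₀) ≠ 0 := ne_of_gt hSpos
  have hSinv : DifferentiableAt ℝ (fun x => (∑ k, W k x)⁻¹) x₀ := hSdiff.inv hSne
  have hBfun : B j = fun x => W j x * (∑ k, W k x)⁻¹ := by
    funext x
    rw [hB j x, div_eq_mul_inv]
  have hmul := hWjderiv.mul hSinv.hasFDerivAt
  have hzero : HasFDerivAt (B j) (0 : EuclideanSpace ℝ (Fin s) →L[ℝ] ℝ) x₀ := by
    rw [hBfun]
    refine hmul.congr_fderiv ?_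
    simp [hWj0]
  exact ⟨hzero.differentiableAt, hzero.fderiv⟩
end

section
/- If μ > 2, then every multinode Shepard basis function B_{μ,j} is twice differentiable at each node x_i with x_i ∉ t_j, and its Hessian matrix there is the zero matrix. -/
open Real Filter Asymptotics

variable {E : Type*} [NormedAddCommGroup E] [InnerProductSpace ℝ E]

lemma normsq_hasFDerivAt (c x : E) :
    HasFDerivAt (fun y : E => ‖y - c‖ ^ (2:ℕ)) ((2:ℝ) • innerSL ℝ (x - c)) x := by
  have h1 : HasFDerivAt (fun y : E => y - c) (ContinuousLinearMap.id ℝ E) x :=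
    (hasFDerivAt_id x).sub_const c
  have h2 := (h1.inner ℝ h1)
  have heq : (fun y : E => @inner ℝ _ _ (y - c) (y - c)) = fun y : E => ‖y - c‖ ^ (2:ℕ) := by
    funext y; rw [real_inner_self_eq_norm_sq]
  rw [heq] at h2
  refine h2.congr_fderiv ?_
  ext v
  simp [fderivInnerCLM, two_smul, ← inner_sub_left, real_inner_comm]

lemma rpow_decomp {μ : ℝ} (hμ : 2 < μ) (r : ℝ) (hr : 0 ≤ r) :
    r ^ μ = (r ^ (2:ℕ)) ^ (μ / 2) := by
  rw [← Real.rpow_natCast r 2, ← Real.rpow_mul hr]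
  norm_num [mul_div_cancel₀]

lemma phi_hasFDerivAt {μ : ℝ} (hμ : 2 < μ) (c x : E) :
    HasFDerivAt (fun y : E => ‖y - c‖ ^ μ)
      ((μ * ‖x - c‖ ^ (μ - 2)) • innerSL ℝ (x - c)) x := by
  have hd : HasDerivAt (fun t : ℝ => t ^ (μ / 2)) (μ / 2 * (‖x - c‖ ^ (2:ℕ)) ^ (μ / 2 - 1))
      (‖x - c‖ ^ (2:ℕ)) :=
    Real.hasDerivAt_rpow_const (Or.inr (by linarith))
  have h := hd.comp_hasFDerivAt x (normsq_hasFDerivAt c x)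
  have heq : (fun y : E => (‖y - c‖ ^ (2:ℕ)) ^ (μ / 2)) = fun y : E => ‖y - c‖ ^ μ := by
    funext y; rw [rpow_decomp hμ _ (norm_nonneg _)]
  rw [show ((fun t : ℝ => t ^ (μ / 2)) ∘ fun y : E => ‖y - c‖ ^ (2:ℕ)) = fun y : E => ‖y - c‖ ^ μ from funext fun y => (rpow_decomp hμ _ (norm_nonneg _)).symm] at h
  refine h.congr_fderiv ?_
  symm
  rw [smul_smul]
  congr 1
  rw [← Real.rpow_natCast ‖x - c‖ 2, ← Real.rpow_mul (norm_nonneg _)]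
  ring_nf

lemma littleO_rpow {ν : ℝ} (hν : 1 < ν) (c : E) :
    (fun x : E => ‖x - c‖ ^ ν) =o[nhds c] fun x => x - c := by
  rw [isLittleO_iff]
  intro ε hε
  have hcont : ContinuousAt (fun t : ℝ => t ^ (ν - 1)) 0 :=
    Real.continuousAt_rpow_const 0 (ν - 1) (Or.inr (by linarith))
  have htend : Tendsto (fun x : E => ‖x - c‖ ^ (ν - 1)) (nhds c) (nhds 0) := by
    have h0 : Tendsto (fun x : E => ‖x - c‖) (nhds c) (nhds 0) := by
      have h0' : Tendsto (fun x : E => ‖x - c‖) (nhds c) (nhds ‖c - c‖) :=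
        ((continuous_id.sub continuous_const).norm.tendsto c : _)
      simpa using h0'
    have := hcont.tendsto.comp h0
    simpa [Function.comp_def, Real.zero_rpow (by linarith : ν - 1 ≠ 0)] using this
  filter_upwards [htend.eventually (eventually_le_nhds hε)] with x hx
  have hsplit : ‖x - c‖ ^ ν = ‖x - c‖ ^ (ν - 1) * ‖x - c‖ := by
    rcases eq_or_ne x c with rfl | hxc
    · simp [Real.zero_rpow (by linarith : ν ≠ 0)]
    · rw [← Real.rpow_add_one (by simpa [sub_eq_zero] using hxc) (ν - 1)]
      ring_nf
  rw [Real.norm_of_nonneg (Real.rpow_nonneg (norm_nonneg _) _), hsplit]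
  exact mul_le_mul_of_nonneg_right hx (norm_nonneg _)

lemma phi_hasFDerivAt_zero {μ : ℝ} (hμ : 2 < μ) (c : E) :
    HasFDerivAt (fun y : E => ‖y - c‖ ^ μ) (0 : E →L[ℝ] ℝ) c := by
  have h := phi_hasFDerivAt hμ c c
  simpa using h

lemma phi_fderiv_eq {μ : ℝ} (hμ : 2 < μ) (c : E) :
    fderiv ℝ (fun y : E => ‖y - c‖ ^ μ) =
      fun x => (μ * ‖x - c‖ ^ (μ - 2)) • innerSL ℝ (x - c) :=
  funext fun x => (phi_hasFDerivAt hμ c x).fderiv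

lemma phi_fderiv_hasFDerivAt_zero {μ : ℝ} (hμ : 2 < μ) (c : E) :
    HasFDerivAt (fderiv ℝ (fun y : E => ‖y - c‖ ^ μ)) (0 : E →L[ℝ] (E →L[ℝ] ℝ)) c := by
  rw [hasFDerivAt_iff_isLittleO_nhds_zero]
  have hfc : fderiv ℝ (fun y : E => ‖y - c‖ ^ μ) c = 0 := (phi_hasFDerivAt_zero hμ c).fderiv
  simp only [hfc, ContinuousLinearMap.zero_apply, sub_zero]
  have hbig : (fun h : E => fderiv ℝ (fun y : E => ‖y - c‖ ^ μ) (c + h)) =O[nhds 0]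
      fun h : E => ‖h‖ ^ (μ - 1) := by
    apply IsBigO.of_bound μ
    filter_upwards with h
    rw [phi_fderiv_eq hμ c]
    simp only [add_sub_cancel_left]
    rw [norm_smul, innerSL_apply_norm, Real.norm_of_nonneg
      (mul_nonneg (by linarith) (Real.rpow_nonneg (norm_nonneg _) _)),
      Real.norm_of_nonneg (Real.rpow_nonneg (norm_nonneg _) _)]
    rcases eq_or_ne h 0 with he | he
    · simp [he, Real.zero_rpow (by linarith : μ - 1 ≠ 0), Real.zero_rpow (by linarith : μ - 2 ≠ 0)]
    · have hn : ‖h‖ ≠ 0 := norm_ne_zero_iff.2 he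
      rw [mul_assoc, ← Real.rpow_add_one hn (μ - 2)]
      ring_nf
      exact le_refl _
  have hlit : (fun h : E => ‖h‖ ^ (μ - 1)) =o[nhds 0] fun h : E => h := by
    have h1 := littleO_rpow (by linarith : (1:ℝ) < μ - 1) c
    have h2 : Tendsto (fun h : E => c + h) (nhds 0) (nhds c) := by
      have h2' : Tendsto (fun h : E => c + h) (nhds 0) (nhds (c + 0)) :=
        ((continuous_const.add continuous_id).tendsto (0 : E) : _)
      simpa using h2'
    have h3 := h1.comp_tendsto h2
    simpa [Function.comp_def, add_sub_cancel_left] using h3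
  exact hbig.trans_isLittleO hlit

section TD
variable {G F : Type*} [NormedAddCommGroup G] [NormedSpace ℝ G]
  [NormedAddCommGroup F] [NormedSpace ℝ F]

def TwiceDiffAt (f : G → F) (c : G) : Prop :=
  (∀ᶠ x in nhds c, DifferentiableAt ℝ f x) ∧ DifferentiableAt ℝ (fderiv ℝ f) c

lemma TwiceDiffAt.of_contDiffAt {f : G → F} {c : G} (h : ContDiffAt ℝ 2 f c) :
    TwiceDiffAt f c := by
  constructor
  · exact (h.eventually (by norm_num)).mono fun x hx => hx.differentiableAt (by norm_num)
  · exact (h.fderiv_right (m := 1) (by norm_num)).differentiableAt (by norm_num)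

lemma eventually_fderiv_mul {f g : G → ℝ} {c : G}
    (hf : ∀ᶠ x in nhds c, DifferentiableAt ℝ f x)
    (hg : ∀ᶠ x in nhds c, DifferentiableAt ℝ g x) :
    fderiv ℝ (fun x => f x * g x) =ᶠ[nhds c]
      fun x => f x • fderiv ℝ g x + g x • fderiv ℝ f x :=
  (hf.and hg).mono fun _ ⟨h1, h2⟩ => fderiv_mul h1 h2

lemma TwiceDiffAt.mul {f g : G → ℝ} {c : G} (hf : TwiceDiffAt f c) (hg : TwiceDiffAt g c) :
    TwiceDiffAt (fun x => f x * g x) c := by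
  refine ⟨(hf.1.and hg.1).mono fun x ⟨h1, h2⟩ => h1.mul h2, ?_⟩
  exact (((hf.1.self_of_nhds).smul hg.2).add
    ((hg.1.self_of_nhds).smul hf.2)).congr_of_eventuallyEq
    (eventually_fderiv_mul hf.1 hg.1)

lemma TwiceDiffAt.add {f g : G → F} {c : G} (hf : TwiceDiffAt f c) (hg : TwiceDiffAt g c) :
    TwiceDiffAt (fun x => f x + g x) c := by
  refine ⟨(hf.1.and hg.1).mono fun x ⟨h1, h2⟩ => h1.add h2, ?_⟩
  have heq : fderiv ℝ (fun x => f x + g x) =ᶠ[nhds c]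
      fun x => fderiv ℝ f x + fderiv ℝ g x :=
    (hf.1.and hg.1).mono fun x ⟨h1, h2⟩ => fderiv_add h1 h2
  exact (hf.2.add hg.2).congr_of_eventuallyEq heq

lemma TwiceDiffAt.inv {f : G → ℝ} {c : G} (hf : TwiceDiffAt f c) (h0 : f c ≠ 0) :
    TwiceDiffAt (fun x => (f x)⁻¹) c := by
  have hne : ∀ᶠ x in nhds c, f x ≠ 0 :=
    (hf.1.self_of_nhds.continuousAt).eventually_ne h0
  refine ⟨(hf.1.and hne).mono fun x ⟨h1, h2⟩ => h1.inv h2, ?_⟩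
  have heq : fderiv ℝ (fun x => (f x)⁻¹) =ᶠ[nhds c]
      fun x => (-(f x ^ 2)⁻¹) • fderiv ℝ f x := by
    refine (hf.1.and hne).mono fun x ⟨h1, h2⟩ => ?_
    have h3 := (hasDerivAt_inv h2).comp_hasFDerivAt x h1.hasFDerivAt
    exact h3.fderiv
  exact ((((hf.1.self_of_nhds.pow 2).inv (pow_ne_zero 2 h0)).neg).smul
    hf.2).congr_of_eventuallyEq heq

end TD

lemma contDiffAt_finset_prod {ι G : Type*} [NormedAddCommGroup G] [NormedSpace ℝ G]
    {s : Finset ι} {f : ι → G → ℝ} {x : G}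
    (h : ∀ q ∈ s, ContDiffAt ℝ 2 (f q) x) :
    ContDiffAt ℝ 2 (fun y => ∏ q ∈ s, f q y) x := by
  classical
  induction s using Finset.induction_on with
  | empty => simpa using contDiffAt_const
  | @insert a s ha ih =>
    simp only [Finset.prod_insert ha]
    exact (h a (Finset.mem_insert_self a s)).mul
      (ih fun q hq => h q (Finset.mem_insert_of_mem hq))

lemma node_contDiffAt {μ : ℝ} {q x0 : E} (hne : x0 ≠ q) :
    ContDiffAt ℝ 2 (fun x : E => ‖x - q‖ ^ μ) x0 := by
  have h1 : ContDiffAt ℝ 2 (fun x : E => x - q) x0 := contDiffAt_id.sub contDiffAt_const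
  have h2 := h1.norm ℝ (by simpa [sub_eq_zero] using hne)
  exact h2.rpow_const_of_ne (norm_ne_zero_iff.2 (by simpa [sub_eq_zero] using hne))

theorem multinode_shepard_hessian_vanishes
    {s n m : ℕ}
    (X : Fin n → EuclideanSpace ℝ (Fin s)) (hX : Function.Injective X)
    (τ : ℕ) (t : Fin m → Finset (Fin n)) (ht : ∀ j, (t j).card = τ)
    (hcov : ∀ i, ∃ j, i ∈ t j)
    (μ : ℝ) (hμ : 2 < μ)
    (W : Fin m → EuclideanSpace ℝ (Fin s) → ℝ)
    (hW : ∀ j x, W j x = ∏ q ∈ (t j)ᶜ, ‖x - X q‖ ^ μ)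
    (B : Fin m → EuclideanSpace ℝ (Fin s) → ℝ)
    (hB : ∀ j x, B j x = W j x / ∑ k, W k x)
    (j : Fin m) (i : Fin n) (hij : i ∉ t j) :
    DifferentiableAt ℝ (B j) (X i) ∧
    DifferentiableAt ℝ (fderiv ℝ (B j)) (X i) ∧
    fderiv ℝ (fderiv ℝ (B j)) (X i) = 0 := by
  classical
  let c : EuclideanSpace ℝ (Fin s) := X i
  let φ : EuclideanSpace ℝ (Fin s) → ℝ := fun x => ‖x - X i‖ ^ μ
  let g : EuclideanSpace ℝ (Fin s) → ℝ := fun x => ∏ q ∈ ((t j)ᶜ).erase i, ‖x - X q‖ ^ μ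
  let A : EuclideanSpace ℝ (Fin s) → ℝ := fun x => ∑ k ∈ Finset.univ.filter (fun k => i ∈ t k),
    ∏ q ∈ (t k)ᶜ, ‖x - X q‖ ^ μ
  let Ee : EuclideanSpace ℝ (Fin s) → ℝ := fun x => ∑ k ∈ Finset.univ.filter (fun k => i ∉ t k),
    ∏ q ∈ ((t k)ᶜ).erase i, ‖x - X q‖ ^ μ
  let den : EuclideanSpace ℝ (Fin s) → ℝ := fun x => A x + φ x * Ee x
  let ψ : EuclideanSpace ℝ (Fin s) → ℝ := fun x => g x * (den x)⁻¹
  -- splitting of W k for i ∉ t k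
  have hWsplit : ∀ k, i ∉ t k → ∀ x, W k x =
      φ x * ∏ q ∈ ((t k)ᶜ).erase i, ‖x - X q‖ ^ μ := by
    intro k hk x
    rw [hW]
    exact (Finset.mul_prod_erase _ _ (Finset.mem_compl.2 hk)).symm
  have hdenD : ∀ x, (∑ k, W k x) = den x := by
    intro x
    rw [← Finset.sum_filter_add_sum_filter_not Finset.univ (fun k => i ∈ t k)
      (fun k => W k x)]
    congr 1
    · exact Finset.sum_congr rfl fun k _ => hW k x
    · rw [Finset.mul_sum]
      exact Finset.sum_congr rfl fun k hk => hWsplit k (Finset.mem_filter.1 hk).2 x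
  have hBeq : B j = fun x => φ x * ψ x := by
    funext x
    rw [hB, hdenD, hWsplit j hij x, div_eq_mul_inv, mul_assoc]
  -- basic values
  have hφc : φ c = 0 := by
    simp [φ, c, Real.zero_rpow (by linarith : μ ≠ 0)]
  have hnodene : ∀ q : Fin n, q ≠ i → c ≠ X q := by
    intro q hq h
    exact hq (hX h.symm)
  have hA0 : 0 < A c := by
    obtain ⟨j₀, hj₀⟩ := hcov i
    have hpos : 0 < ∏ q ∈ (t j₀)ᶜ, ‖c - X q‖ ^ μ := by
      apply Finset.prod_pos
      intro q hq
      have hqi : q ≠ i := fun h => (Finset.mem_compl.1 hq) (h ▸ hj₀)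
      exact Real.rpow_pos_of_pos (norm_pos_iff.2 (sub_ne_zero.2 (hnodene q hqi))) μ
    have hle : ∏ q ∈ (t j₀)ᶜ, ‖c - X q‖ ^ μ ≤ A c := by
      apply Finset.single_le_sum (f := fun k => ∏ q ∈ (t k)ᶜ, ‖c - X q‖ ^ μ)
      · intro k _
        exact Finset.prod_nonneg fun q _ => Real.rpow_nonneg (norm_nonneg _) μ
      · exact Finset.mem_filter.2 ⟨Finset.mem_univ _, hj₀⟩
    linarith
  have hdenc : den c ≠ 0 := by
    have : den c = A c := by simp [den, hφc]
    rw [this]; exact ne_of_gt hA0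
  -- twice differentiability of the pieces
  have hTφ : TwiceDiffAt φ c :=
    ⟨Filter.Eventually.of_forall fun x => (phi_hasFDerivAt hμ (X i) x).differentiableAt,
     (phi_fderiv_hasFDerivAt_zero hμ (X i)).differentiableAt⟩
  have hTg : ContDiffAt ℝ 2 g c := by
    apply contDiffAt_finset_prod
    intro q hq
    exact node_contDiffAt (hnodene q (Finset.ne_of_mem_erase hq))
  have hTA : ContDiffAt ℝ 2 A c := by
    apply ContDiffAt.sum
    intro k hk
    apply contDiffAt_finset_prod
    intro q hq
    have hqi : q ≠ i := fun h => (Finset.mem_compl.1 hq) (h ▸ (Finset.mem_filter.1 hk).2)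
    exact node_contDiffAt (hnodene q hqi)
  have hTE : ContDiffAt ℝ 2 Ee c := by
    apply ContDiffAt.sum
    intro k hk
    apply contDiffAt_finset_prod
    intro q hq
    exact node_contDiffAt (hnodene q (Finset.ne_of_mem_erase hq))
  have hTden : TwiceDiffAt den c :=
    (TwiceDiffAt.of_contDiffAt hTA).add (hTφ.mul (TwiceDiffAt.of_contDiffAt hTE))
  have hTψ : TwiceDiffAt ψ c :=
    (TwiceDiffAt.of_contDiffAt hTg).mul (hTden.inv hdenc)
  have hTB : TwiceDiffAt (fun x => φ x * ψ x) c := hTφ.mul hTψ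
  rw [hBeq]
  refine ⟨hTB.1.self_of_nhds, hTB.2, ?_⟩
  have heq := eventually_fderiv_mul hTφ.1 hTψ.1
  rw [heq.fderiv_eq]
  have hφ'c : fderiv ℝ φ c = 0 := (phi_hasFDerivAt_zero hμ (X i)).fderiv
  have h1 : HasFDerivAt (fun x => φ x • fderiv ℝ ψ x)
      (0 : EuclideanSpace ℝ (Fin s) →L[ℝ] (EuclideanSpace ℝ (Fin s) →L[ℝ] ℝ)) c := by
    have h := (phi_hasFDerivAt_zero hμ (X i)).smul hTψ.2.hasFDerivAt
    refine h.congr_fderiv ?_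
    ext v w
    simp [Real.zero_rpow (show μ ≠ 0 by linarith)]
  have h2 : HasFDerivAt (fun x => ψ x • fderiv ℝ φ x)
      (0 : EuclideanSpace ℝ (Fin s) →L[ℝ] (EuclideanSpace ℝ (Fin s) →L[ℝ] ℝ)) c := by
    have h := (hTψ.1.self_of_nhds.hasFDerivAt).smul
      (phi_fderiv_hasFDerivAt_zero hμ (X i))
    refine h.congr_fderiv ?_
    ext v w
    simp [hφ'c, (phi_hasFDerivAt_zero hμ (X i)).fderiv]
    exact Or.inr (by simp [show fderiv ℝ (fun y : EuclideanSpace ℝ (Fin s) => ‖y - X i‖ ^ μ) c = 0 from hφ'c])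
    
  have h3 := (h1.add h2).fderiv
  rw [add_zero] at h3
  exact h3
end

section
/- If μ > 2, then for every node x_i, the Hessians of the Shepard basis functions indexed by J_i sum to the zero matrix at x_i: ∑_{j ∈ J_i} Hess B_{μ,j}(x_i) = 0. -/
set_option synthInstance.maxHeartbeats 1000000
set_option maxHeartbeats 2000000
set_option linter.unusedSectionVars false
set_option linter.unusedVariables false

open Filter Topology Asymptotics

section helpers
variable {E : Type*} [NormedAddCommGroup E] [InnerProductSpace ℝ E]

lemma shep_hasFDerivAt (p : E) {μ : ℝ} (hμ : 2 < μ) (x : E) :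
    HasFDerivAt (fun y => ‖y - p‖ ^ μ)
      ((μ * ‖x - p‖ ^ (μ - 2)) • (innerSL ℝ (x - p))) x := by
  have h1 : HasFDerivAt (fun y : E => y - p) (ContinuousLinearMap.id ℝ E) x :=
    (hasFDerivAt_id x).sub_const p
  have h3 := h1.norm_sq.rpow_const (p := μ / 2) (Or.inr (by linarith))
  have heq : (fun y : E => ((‖y - p‖ : ℝ) ^ (2 : ℕ)) ^ (μ / 2))
      = fun y : E => ‖y - p‖ ^ μ := by
    funext y
    rw [← Real.rpow_natCast (‖y - p‖) 2, ← Real.rpow_mul (norm_nonneg _),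
      show ((2 : ℕ) : ℝ) * (μ / 2) = μ by push_cast; ring]
  rw [heq] at h3
  convert h3 using 1
  have harg : ((‖x - p‖ : ℝ) ^ (2 : ℕ)) ^ (μ / 2 - 1) = ‖x - p‖ ^ (μ - 2) := by
    rw [← Real.rpow_natCast (‖x - p‖) 2, ← Real.rpow_mul (norm_nonneg _),
      show ((2 : ℕ) : ℝ) * (μ / 2 - 1) = μ - 2 by push_cast; ring]
  rw [harg]
  ext v
  simp [ContinuousLinearMap.smul_apply, two_smul]
  ring

lemma shep_deriv_norm (p : E) {μ : ℝ} (hμ : 2 < μ) (x : E) :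
    ‖(μ * ‖x - p‖ ^ (μ - 2)) • (innerSL ℝ (x - p))‖ = μ * ‖x - p‖ ^ (μ - 1) := by
  rw [norm_smul (μ * ‖x - p‖ ^ (μ - 2)) (innerSL ℝ (x - p)), innerSL_apply_norm,
    Real.norm_eq_abs, abs_of_nonneg (by positivity : (0:ℝ) ≤ μ * ‖x - p‖ ^ (μ - 2))]
  rcases eq_or_ne (‖x - p‖) 0 with h | h
  · rw [h, Real.zero_rpow (by linarith), Real.zero_rpow (by linarith)]; ring
  · rw [mul_assoc, ← Real.rpow_add_one h, show μ - 2 + 1 = μ - 1 by ring]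

lemma shep_isLittleO (p : E) {ν : ℝ} (hν : 1 < ν) :
    (fun x : E => ‖x - p‖ ^ ν) =o[𝓝 p] fun x => x - p := by
  rw [Asymptotics.isLittleO_iff]
  intro ε hε
  have hδ : (0:ℝ) < ε ^ (1 / (ν - 1)) := Real.rpow_pos_of_pos hε _
  filter_upwards [Metric.ball_mem_nhds p hδ] with x hx
  rw [Metric.mem_ball, dist_eq_norm] at hx
  rw [Real.norm_of_nonneg (Real.rpow_nonneg (norm_nonneg _) _)]
  rcases eq_or_ne x p with rfl | hxp
  · simp [Real.zero_rpow (by linarith : ν ≠ 0)]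
  · have hpos : 0 < ‖x - p‖ := norm_pos_iff.2 (sub_ne_zero.2 hxp)
    calc ‖x - p‖ ^ ν = ‖x - p‖ ^ (ν - 1) * ‖x - p‖ := by
          rw [← Real.rpow_add_one hpos.ne' (ν - 1), sub_add_cancel]
      _ ≤ ε * ‖x - p‖ := by
          apply mul_le_mul_of_nonneg_right _ (norm_nonneg _)
          calc ‖x - p‖ ^ (ν - 1) ≤ (ε ^ (1 / (ν - 1))) ^ (ν - 1) :=
                Real.rpow_le_rpow (norm_nonneg _) hx.le (by linarith)
            _ = ε := by
                rw [← Real.rpow_mul hε.le, one_div,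
                  inv_mul_cancel₀ (by linarith : ν - 1 ≠ 0), Real.rpow_one]

lemma shep_key (p : E) {μ : ℝ} (hμ : 2 < μ) {ψ : E → ℝ} (hψ : ContDiffAt ℝ 1 ψ p) :
    HasFDerivAt (fun x => ‖x - p‖ ^ μ * ψ x) (0 : E →L[ℝ] ℝ) p ∧
      HasFDerivAt (fderiv ℝ (fun x => ‖x - p‖ ^ μ * ψ x)) (0 : E →L[ℝ] (E →L[ℝ] ℝ)) p := by
  have hgp : HasFDerivAt (fun y : E => ‖y - p‖ ^ μ) (0 : E →L[ℝ] ℝ) p := by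
    have := shep_hasFDerivAt p hμ p
    simpa [Real.zero_rpow (show μ - 2 ≠ 0 by linarith)] using this
  have hψd : DifferentiableAt ℝ ψ p := hψ.differentiableAt one_ne_zero
  have part1 : HasFDerivAt (fun x => ‖x - p‖ ^ μ * ψ x) (0 : E →L[ℝ] ℝ) p := by
    have := hgp.fun_mul hψd.hasFDerivAt
    simpa [Real.zero_rpow (show μ ≠ 0 by linarith)] using this
  refine ⟨part1, ?_⟩
  obtain ⟨u, hu, hcd⟩ : ∃ u ∈ 𝓝 p, ContDiffOn ℝ 1 ψ u :=
    hψ.contDiffOn le_rfl (by simp)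
  set v := interior u with hv
  have hvo : IsOpen v := isOpen_interior
  have hpv : p ∈ v := mem_interior_iff_mem_nhds.2 hu
  have hcdv : ContDiffOn ℝ 1 ψ v := hcd.mono interior_subset
  have hdiffv : ∀ x ∈ v, DifferentiableAt ℝ ψ x := fun x hx =>
    (hcdv.contDiffAt (hvo.mem_nhds hx)).differentiableAt one_ne_zero
  have hfc : ContinuousOn (fderiv ℝ ψ) v :=
    hcdv.continuousOn_fderiv_of_isOpen hvo le_rfl
  have hfcp : ContinuousAt (fderiv ℝ ψ) p := hfc.continuousAt (hvo.mem_nhds hpv)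
  -- eventual bounds
  have hb1 : ∀ᶠ x in 𝓝 p, ‖fderiv ℝ ψ x‖ ≤ ‖fderiv ℝ ψ p‖ + 1 := by
    exact hfcp.norm.eventually_le_const (by linarith [norm_nonneg (fderiv ℝ ψ p)] :
      ‖fderiv ℝ ψ p‖ < ‖fderiv ℝ ψ p‖ + 1)
  have hb2 : ∀ᶠ x in 𝓝 p, |ψ x| ≤ |ψ p| + 1 := by
    exact hψ.continuousAt.abs.eventually_le_const
      (by linarith [abs_nonneg (ψ p)] : |ψ p| < |ψ p| + 1)
  have hb3 : ∀ᶠ x in 𝓝 p, ‖x - p‖ ≤ 1 := by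
    filter_upwards [Metric.closedBall_mem_nhds p one_pos] with x hx
    rwa [Metric.mem_closedBall, dist_eq_norm] at hx
  -- fderiv formula eventually
  have hfd : ∀ᶠ x in 𝓝 p, fderiv ℝ (fun y => ‖y - p‖ ^ μ * ψ y) x
      = (‖x - p‖ ^ μ) • fderiv ℝ ψ x + ψ x • ((μ * ‖x - p‖ ^ (μ - 2)) • (innerSL ℝ (x - p))) := by
    filter_upwards [hvo.mem_nhds hpv] with x hx
    exact ((shep_hasFDerivAt p hμ x).mul (hdiffv x hx).hasFDerivAt).fderiv
  -- big-O bound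
  set C := (|ψ p| + 1) * μ + (‖fderiv ℝ ψ p‖ + 1) with hC
  have hO : (fun x => fderiv ℝ (fun y => ‖y - p‖ ^ μ * ψ y) x)
      =O[𝓝 p] fun x => ‖x - p‖ ^ (μ - 1) := by
    apply IsBigO.of_bound C
    filter_upwards [hfd, hb1, hb2, hb3] with x h1 h2 h3 h4
    rw [h1]
    have hr1 : (0:ℝ) ≤ ‖x - p‖ ^ (μ - 1) := Real.rpow_nonneg (norm_nonneg _) _
    have hle : ‖x - p‖ ^ μ ≤ ‖x - p‖ ^ (μ - 1) :=
      Real.rpow_le_rpow_of_exponent_ge' (norm_nonneg _) h4 (by linarith) (by linarith)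
    calc ‖(‖x - p‖ ^ μ) • fderiv ℝ ψ x + ψ x • ((μ * ‖x - p‖ ^ (μ - 2)) • (innerSL ℝ (x - p)))‖
        ≤ ‖(‖x - p‖ ^ μ) • fderiv ℝ ψ x‖
            + ‖ψ x • ((μ * ‖x - p‖ ^ (μ - 2)) • (innerSL ℝ (x - p)))‖ := norm_add_le _ _
      _ = ‖x - p‖ ^ μ * ‖fderiv ℝ ψ x‖ + |ψ x| * (μ * ‖x - p‖ ^ (μ - 1)) := by
          rw [norm_smul (ψ x) ((μ * ‖x - p‖ ^ (μ - 2)) • (innerSL ℝ (x - p))),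
            shep_deriv_norm p hμ x,
            norm_smul (‖x - p‖ ^ μ) (fderiv ℝ ψ x), Real.norm_eq_abs, Real.norm_eq_abs,
            abs_of_nonneg (Real.rpow_nonneg (norm_nonneg _) (μ : ℝ))]
      _ ≤ ‖x - p‖ ^ (μ - 1) * (‖fderiv ℝ ψ p‖ + 1)
            + (|ψ p| + 1) * (μ * ‖x - p‖ ^ (μ - 1)) := by
          refine add_le_add (mul_le_mul hle h2 (norm_nonneg _) hr1)
            (mul_le_mul_of_nonneg_right h3 (by positivity))
      _ = C * ‖x - p‖ ^ (μ - 1) := by rw [hC]; ring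
      _ ≤ C * ‖‖x - p‖ ^ (μ - 1)‖ := by rw [Real.norm_of_nonneg hr1]
  have hlo := hO.trans_isLittleO (shep_isLittleO p (by linarith : 1 < μ - 1))
  have h0 : fderiv ℝ (fun y => ‖y - p‖ ^ μ * ψ y) p = 0 := part1.fderiv
  refine HasFDerivAt.of_isLittleO ?_
  simpa [h0] using hlo

end helpers

theorem multinode_shepard_hessian_sum_vanishes
    {s n m : ℕ}
    (X : Fin n → EuclideanSpace ℝ (Fin s)) (hX : Function.Injective X)
    (τ : ℕ) (t : Fin m → Finset (Fin n)) (ht : ∀ j, (t j).card = τ)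
    (hcov : ∀ i, ∃ j, i ∈ t j)
    (μ : ℝ) (hμ : 2 < μ)
    (W : Fin m → EuclideanSpace ℝ (Fin s) → ℝ)
    (hW : ∀ j x, W j x = ∏ q ∈ (t j)ᶜ, ‖x - X q‖ ^ μ)
    (B : Fin m → EuclideanSpace ℝ (Fin s) → ℝ)
    (hB : ∀ j x, B j x = W j x / ∑ k, W k x)
    (i : Fin n) :
    (∀ j ∈ Finset.univ.filter (fun j => i ∈ t j),
      DifferentiableAt ℝ (B j) (X i) ∧ DifferentiableAt ℝ (fderiv ℝ (B j)) (X i)) ∧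
    ∑ j ∈ Finset.univ.filter (fun j => i ∈ t j), fderiv ℝ (fderiv ℝ (B j)) (X i) = 0 := by
  classical
  set c := X i with hc
  set J := Finset.univ.filter (fun j => i ∈ t j) with hJ
  obtain ⟨j₀, hj₀⟩ := hcov i
  have hJne : J.Nonempty := ⟨j₀, by simp [hJ, hj₀]⟩
  have hμ0 : μ ≠ 0 := by linarith
  have hfq1 : ∀ q : Fin n, ContDiff ℝ 1 (fun x : EuclideanSpace ℝ (Fin s) => ‖x - X q‖ ^ μ) := by
    intro q
    rw [contDiff_one_iff_fderiv]
    constructor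
    · exact fun x => (shep_hasFDerivAt (X q) hμ x).differentiableAt
    · have hfd : (fderiv ℝ fun x : EuclideanSpace ℝ (Fin s) => ‖x - X q‖ ^ μ)
          = fun x => (μ * ‖x - X q‖ ^ (μ - 2)) • (innerSL ℝ (x - X q)) :=
        funext fun x => (shep_hasFDerivAt (X q) hμ x).fderiv
      rw [hfd]
      have hcont : Continuous fun x : EuclideanSpace ℝ (Fin s) => ‖x - X q‖ ^ (μ - 2) :=
        continuous_iff_continuousAt.2 fun x =>
          ((continuous_id.sub continuous_const).norm.continuousAt).rpow_const
            (Or.inr (by linarith))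
      exact (continuous_const.mul hcont).smul
        ((innerSL ℝ).continuous.comp (continuous_id.sub continuous_const))
  have hWfun : ∀ j, W j = fun x => ∏ q ∈ (t j)ᶜ, ‖x - X q‖ ^ μ := fun j => funext (hW j)
  have hW1 : ∀ j, ContDiff ℝ 1 (W j) := by
    intro j; rw [hWfun j]; exact contDiff_prod fun q _ => hfq1 q
  have hD1 : ContDiff ℝ 1 (fun x => ∑ k, W k x) := ContDiff.sum fun k _ => hW1 k
  have hfq2 : ∀ q : Fin n, q ≠ i →
      ContDiffAt ℝ 2 (fun x : EuclideanSpace ℝ (Fin s) => ‖x - X q‖ ^ μ) c := by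
    intro q hq
    have hne : c - X q ≠ 0 := sub_ne_zero.2 fun h => hq (hX h).symm
    have hnorm : ContDiffAt ℝ 2 (fun x : EuclideanSpace ℝ (Fin s) => ‖x - X q‖) c :=
      ContDiffAt.norm ℝ (contDiffAt_id.sub contDiffAt_const) hne
    exact (Real.contDiffAt_rpow_const_of_ne (norm_ne_zero_iff.2 hne)).comp c hnorm
  have hWj2 : ∀ j ∈ J, ContDiffAt ℝ 2 (W j) c := by
    intro j hj
    rw [hWfun j]
    refine contDiffAt_prod fun q hq => hfq2 q ?_
    rintro rfl
    rw [Finset.mem_compl] at hq; exact hq (by simpa [hJ] using hj)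
  set A := fun x : EuclideanSpace ℝ (Fin s) => ∑ j ∈ J, W j x with hA
  have hA2 : ContDiffAt ℝ 2 A c := ContDiffAt.sum fun j hj => hWj2 j hj
  have hApos : 0 < A c := by
    refine Finset.sum_pos (fun j hj => ?_) hJne
    rw [hW j c]
    refine Finset.prod_pos fun q hq => Real.rpow_pos_of_pos ?_ μ
    have hqi : q ≠ i := by
      rintro rfl; rw [Finset.mem_compl] at hq; exact hq (by simpa [hJ] using hj)
    exact norm_pos_iff.2 (sub_ne_zero.2 fun h => hqi (hX h).symm)
  set R := fun x : EuclideanSpace ℝ (Fin s) => ∑ j ∈ Finset.univ.filter (fun j => i ∉ t j),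
      ∏ q ∈ ((t j)ᶜ).erase i, ‖x - X q‖ ^ μ with hR
  have hR2 : ContDiffAt ℝ 2 R c := ContDiffAt.sum fun j _ => contDiffAt_prod fun q hq =>
      hfq2 q (Finset.ne_of_mem_erase hq)
  have hDeq : ∀ x : EuclideanSpace ℝ (Fin s), (∑ k, W k x) = A x + ‖x - c‖ ^ μ * R x := by
    intro x
    rw [← Finset.sum_filter_add_sum_filter_not Finset.univ (fun j => i ∈ t j) (fun k => W k x)]
    congr 1
    rw [hR, Finset.mul_sum]
    refine Finset.sum_congr rfl fun j hj => ?_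
    rw [Finset.mem_filter] at hj
    rw [hW j x, ← Finset.mul_prod_erase ((t j)ᶜ) _ (Finset.mem_compl.2 hj.2), hc]
  have hgc : (‖(c : EuclideanSpace ℝ (Fin s)) - c‖ : ℝ) ^ μ = 0 := by
    simp [Real.zero_rpow hμ0]
  have hDc : (∑ k, W k c) = A c := by rw [hDeq c, hgc]; ring
  have hDne : ∀ᶠ x in 𝓝 c, (∑ k, W k x) ≠ 0 :=
    hD1.continuous.continuousAt.eventually_ne (by rw [hDc]; exact hApos.ne')
  have hAne : ∀ᶠ x in 𝓝 c, A x ≠ 0 := hA2.continuousAt.eventually_ne hApos.ne'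
  have hmain : ∀ j ∈ J,
      (DifferentiableAt ℝ (B j) c ∧ DifferentiableAt ℝ (fderiv ℝ (B j)) c) ∧
        fderiv ℝ (fderiv ℝ (B j)) c
          = fderiv ℝ (fderiv ℝ (fun x => W j x / A x)) c := by
    intro j hj
    have hBt2 : ContDiffAt ℝ 2 (fun x => W j x / A x) c := (hWj2 j hj).div hA2 hApos.ne'
    set ψ := fun x : EuclideanSpace ℝ (Fin s) =>
      -(W j x * R x) / ((∑ k, W k x) * A x) with hψdef
    have hψ1 : ContDiffAt ℝ 1 ψ c := by
      refine ContDiffAt.div ?_ ?_ ?_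
      · exact (((hW1 j).contDiffAt).mul (hR2.of_le one_le_two)).neg
      · exact (hD1.contDiffAt).mul (hA2.of_le one_le_two)
      · rw [hDc]; exact mul_ne_zero hApos.ne' hApos.ne'
    obtain ⟨hkey1, hkey2⟩ := shep_key c hμ hψ1
    have hBeq : B j =ᶠ[𝓝 c] fun x => W j x / A x + ‖x - c‖ ^ μ * ψ x := by
      filter_upwards [hDne, hAne] with x hDx hAx
      have hd' : A x + ‖x - c‖ ^ μ * R x ≠ 0 := hDeq x ▸ hDx
      simp only [hB j x, hψdef]
      rw [hDeq x]
      field_simp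
      ring
    have hGdiff_ev : ∀ᶠ x in 𝓝 c,
        DifferentiableAt ℝ (fun y => ‖y - c‖ ^ μ * ψ y) x := by
      filter_upwards [hψ1.eventually (by simp)] with x hx
      exact ((shep_hasFDerivAt c hμ x).differentiableAt).mul (hx.differentiableAt one_ne_zero)
    have hBt_ev : ∀ᶠ x in 𝓝 c, DifferentiableAt ℝ (fun y => W j y / A y) x := by
      filter_upwards [hBt2.eventually (by simp)] with x hx
      exact hx.differentiableAt two_ne_zero
    have h1 : DifferentiableAt ℝ (B j) c :=
      (hBeq.differentiableAt_iff).2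
        ((hBt2.differentiableAt two_ne_zero).add hkey1.differentiableAt)
    have hf_ev : fderiv ℝ (B j) =ᶠ[𝓝 c]
        fun x => fderiv ℝ (fun y => W j y / A y) x
          + fderiv ℝ (fun y => ‖y - c‖ ^ μ * ψ y) x := by
      filter_upwards [hBeq.eventually_nhds, hBt_ev, hGdiff_ev] with x hx hbt hg
      rw [Filter.EventuallyEq.fderiv_eq hx, fderiv_fun_add hbt hg]
    have hBtf : DifferentiableAt ℝ (fderiv ℝ (fun x => W j x / A x)) c :=
      (hBt2.fderiv_right (m := 1) (by norm_num)).differentiableAt one_ne_zero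
    have h2 : DifferentiableAt ℝ (fderiv ℝ (B j)) c :=
      hf_ev.differentiableAt_iff.2 (hBtf.add hkey2.differentiableAt)
    refine ⟨⟨h1, h2⟩, ?_⟩
    rw [hf_ev.fderiv_eq, fderiv_fun_add hBtf hkey2.differentiableAt, hkey2.fderiv, add_zero]
  constructor
  · exact fun j hj => (hmain j hj).1
  · have hsum : ∑ j ∈ J, fderiv ℝ (fderiv ℝ (B j)) c
        = ∑ j ∈ J, fderiv ℝ (fderiv ℝ (fun x => W j x / A x)) c :=
      Finset.sum_congr rfl fun j hj => (hmain j hj).2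
    rw [hsum]
    have hBt2' : ∀ j ∈ J, ContDiffAt ℝ 2 (fun x => W j x / A x) c := fun j hj =>
      (hWj2 j hj).div hA2 hApos.ne'
    have hBtf' : ∀ j ∈ J, DifferentiableAt ℝ (fderiv ℝ (fun x => W j x / A x)) c := fun j hj =>
      ((hBt2' j hj).fderiv_right (m := 1) (by norm_num)).differentiableAt one_ne_zero
    have hdiff_ev : ∀ᶠ x in 𝓝 c, ∀ j ∈ J, DifferentiableAt ℝ (fun y => W j y / A y) x := by
      rw [Filter.eventually_all_finset]
      intro j hj
      filter_upwards [(hBt2' j hj).eventually (by simp)] with x hx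
      exact hx.differentiableAt two_ne_zero
    have hT1 : (fun x => ∑ j ∈ J, W j x / A x) =ᶠ[𝓝 c] fun _ => (1:ℝ) := by
      filter_upwards [hAne] with x hAx
      have hax : ∑ j ∈ J, W j x = A x := rfl
      rw [← Finset.sum_div, hax, div_self hAx]
    have hfT_ev : (fun x => ∑ j ∈ J, fderiv ℝ (fun y => W j y / A y) x) =ᶠ[𝓝 c]
        fun _ => (0 : EuclideanSpace ℝ (Fin s) →L[ℝ] ℝ) := by
      filter_upwards [hT1.eventually_nhds, hdiff_ev] with x hx hdx
      rw [← fderiv_fun_sum hdx, Filter.EventuallyEq.fderiv_eq hx]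
      exact fderiv_const_apply 1
    calc ∑ j ∈ J, fderiv ℝ (fderiv ℝ (fun x => W j x / A x)) c
        = fderiv ℝ (fun x => ∑ j ∈ J, fderiv ℝ (fun y => W j y / A y) x) c :=
          (fderiv_fun_sum fun j hj => hBtf' j hj).symm
      _ = fderiv ℝ (fun _ : EuclideanSpace ℝ (Fin s) =>
            (0 : EuclideanSpace ℝ (Fin s) →L[ℝ] ℝ)) c := hfT_ev.fderiv_eq
      _ = 0 := fderiv_const_apply 0
end

section
/- A-stability inequality for BDF2: for every complex number z with Re(z) ≤ 0, all roots w of the BDF2 characteristic polynomial (1 − (2/3)z)w² − (4/3)w + 1/3 = 0 satisfy |w| ≤ 1. -/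
/-- A-stability of BDF2: for every `z` with `Re z ≤ 0`, all roots `w` of the BDF2
characteristic polynomial `(1 − (2/3)z)w² − (4/3)w + 1/3 = 0` satisfy `|w| ≤ 1`. -/
theorem bdf2_A_stable :
    ∀ z : ℂ, z.re ≤ 0 →
      ∀ w : ℂ, (1 - (2 / 3) * z) * w ^ 2 - (4 / 3) * w + 1 / 3 = 0 →
        ‖w‖ ≤ 1 := by
  intro z hz w heq
  by_contra hw
  push_neg at hw
  have hw0 : w ≠ 0 := by
    intro h; rw [h] at hw; simp at hw; linarith
  have key : z * (2 * w ^ 2) = 3 * w ^ 2 - 4 * w + 1 := by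
    linear_combination (-3 : ℂ) * heq
  set u : ℂ := w⁻¹ with hu
  have hzu : z = 3 / 2 - 2 * u + u ^ 2 / 2 := by
    have hne : (2 : ℂ) * w ^ 2 ≠ 0 := by simp [hw0]
    apply mul_right_cancel₀ hne
    rw [hu, key]
    field_simp
    ring
  have hule : ‖u‖ < 1 := by
    rw [hu, norm_inv]
    exact inv_lt_one_of_one_lt₀ hw
  have hn : u.re ^ 2 + u.im ^ 2 < 1 := by
    have := Complex.sq_norm u
    rw [Complex.normSq_apply] at this
    nlinarith [norm_nonneg u]
  have hre : z.re = 3 / 2 - 2 * u.re + (u.re ^ 2 - u.im ^ 2) / 2 := by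
    rw [hzu]
    simp [Complex.sub_re, Complex.add_re, Complex.mul_re, Complex.div_re,
      Complex.normSq_apply, pow_two]
    try ring
  nlinarith [sq_nonneg (1 - u.re)]
end

section
/- For μ > 0 and a node x_i ∉ t_j, the function B_{μ,j} is not merely zero at x_i but vanishes to order μ: there exist a neighborhood U of x_i and a constant C > 0 such that B_{μ,j}(x) ≤ C‖x − x_i‖^{μ} for all x ∈ U. -/
theorem multinode_shepard_vanishing_order_mu
    {s n m : ℕ}
    (X : Fin n → EuclideanSpace ℝ (Fin s)) (hX : Function.Injective X)
    (τ : ℕ) (t : Fin m → Finset (Fin n)) (ht : ∀ j, (t j).card = τ)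
    (hcov : ∀ i, ∃ j, i ∈ t j)
    (μ : ℝ) (hμ : 0 < μ)
    (W : Fin m → EuclideanSpace ℝ (Fin s) → ℝ)
    (hW : ∀ j x, W j x = ∏ q ∈ (t j)ᶜ, ‖x - X q‖ ^ μ)
    (B : Fin m → EuclideanSpace ℝ (Fin s) → ℝ)
    (hB : ∀ j x, B j x = W j x / ∑ k, W k x)
    (j : Fin m) (i : Fin n) (hij : i ∉ t j) :
    ∃ U ∈ nhds (X i), ∃ C > (0:ℝ), ∀ x ∈ U, B j x ≤ C * ‖x - X i‖ ^ μ := by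
  obtain ⟨k, hk⟩ := hcov i
  -- basic positivity facts
  have hWnonneg : ∀ l x, 0 ≤ W l x := by
    intro l x
    rw [hW]
    exact Finset.prod_nonneg fun q _ => Real.rpow_nonneg (norm_nonneg _) μ
  have contW : ∀ l, Continuous (W l) := by
    intro l
    have : W l = fun x => ∏ q ∈ (t l)ᶜ, ‖x - X q‖ ^ μ := funext (hW l)
    rw [this]
    exact continuous_finset_prod _ fun q _ =>
      ((continuous_id.sub continuous_const).norm).rpow_const fun x => Or.inr hμ.le
  set c := W k (X i) with hc
  have hcpos : 0 < c := by
    rw [hc, hW]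
    apply Finset.prod_pos
    intro q hq
    have hqne : q ≠ i := by
      intro h; subst h; exact (Finset.mem_compl.mp hq) hk
    have : X i ≠ X q := fun h => hqne (hX h).symm
    exact Real.rpow_pos_of_pos (by simpa [sub_eq_zero] using this) μ
  -- the remaining product
  set P : EuclideanSpace ℝ (Fin s) → ℝ := fun x => ∏ q ∈ ((t j)ᶜ).erase i, ‖x - X q‖ ^ μ
    with hP
  have hiC : i ∈ (t j)ᶜ := Finset.mem_compl.mpr hij
  have hWjP : ∀ x, W j x = ‖x - X i‖ ^ μ * P x := by
    intro x
    rw [hW, hP]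
    exact (Finset.mul_prod_erase _ _ hiC).symm
  have hPnonneg : ∀ x, 0 ≤ P x :=
    fun x => Finset.prod_nonneg fun q _ => Real.rpow_nonneg (norm_nonneg _) μ
  have contP : Continuous P := continuous_finset_prod _ fun q _ =>
    ((continuous_id.sub continuous_const).norm).rpow_const fun x => Or.inr hμ.le
  have h1 : ∀ᶠ x in nhds (X i), W k x ∈ Set.Ioi (c / 2) :=
    (contW k).continuousAt (Ioi_mem_nhds (by linarith))
  have h2 : ∀ᶠ x in nhds (X i), P x ∈ Set.Iio (P (X i) + 1) :=
    contP.continuousAt (Iio_mem_nhds (by linarith [hPnonneg (X i)]))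
  refine ⟨{x | W k x ∈ Set.Ioi (c / 2) ∧ P x ∈ Set.Iio (P (X i) + 1)}, h1.and h2,
    (P (X i) + 1) / (c / 2), by positivity, ?_⟩
  rintro x ⟨hx1, hx2⟩
  have hS : c / 2 < ∑ l, W l x := by
    calc c / 2 < W k x := hx1
    _ ≤ ∑ l, W l x := Finset.single_le_sum (fun l _ => hWnonneg l x) (Finset.mem_univ k)
  have hSpos : 0 < ∑ l, W l x := lt_trans (by linarith) hS
  rw [hB, hWjP]
  have hnorm : (0:ℝ) ≤ ‖x - X i‖ ^ μ := Real.rpow_nonneg (norm_nonneg _) μ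
  have hc2 : (0:ℝ) < c / 2 := half_pos hcpos
  calc ‖x - X i‖ ^ μ * P x / ∑ l, W l x
      ≤ ‖x - X i‖ ^ μ * P x / (c / 2) :=
        div_le_div_of_nonneg_left (mul_nonneg hnorm (hPnonneg x)) hc2 hS.le
    _ ≤ ‖x - X i‖ ^ μ * (P (X i) + 1) / (c / 2) :=
        div_le_div_of_nonneg_right (mul_le_mul_of_nonneg_left hx2.le hnorm) hc2.le
    _ = (P (X i) + 1) / (c / 2) * ‖x - X i‖ ^ μ := by ring
end
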